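/- Precision of the fixed-point Newton solver: let $K$ be a finite extension of $\mathbb{Q}_p$ with $p \geq 5$, and suppose two inputs $G, \tilde{G} \in (\mathcal{O}_K[[t]]/(t^n))^g$ satisfy $\|G - \tilde{G}\| \leq p^{-M}$ in Gauss norm with $M = N + \lfloor \log_p n \rfloor$ and $N \geq 1$. If the solution $X(G)$ of $H_\mathrm{f}(X)X' = G$ has coefficients in $\mathcal{O}_K$, then $\|X_n(G) - X_n(\tilde{G})\| \leq p^{-N}$, where $X_n$ denotes the truncated-solution map mod $t^{n+1}$. -/

import Mathlib

open PowerSeries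

/-- Composition `f ∘ x` of formal power series, well defined when `x(0) = 0`. -/
noncomputable def pscomp {K : Type*} [Field K] (f x : PowerSeries K) : PowerSeries K :=
  PowerSeries.mk fun n =>
    PowerSeries.coeff (R := K) n
      (∑ k ∈ Finset.range (n + 1), PowerSeries.C (R := K) (PowerSeries.coeff (R := K) k f) * x ^ k)

/-- Formal derivative of a power series. -/
noncomputable def psderiv {K : Type*} [Field K] (f : PowerSeries K) : PowerSeries K :=
  PowerSeries.mk fun n => ((n + 1 : ℕ) : K) * PowerSeries.coeff (R := K) (n + 1) f

/-- Formal antiderivative with zero constant term. -/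
noncomputable def psint {K : Type*} [Field K] (f : PowerSeries K) : PowerSeries K :=
  PowerSeries.mk fun n => if n = 0 then 0 else ((n : ℕ) : K)⁻¹ * PowerSeries.coeff (R := K) (n - 1) f

/-- The matrix `H_f(X) = (f_{ij}(x_j))_{ij}` obtained by composing the entries of `f`
with the coordinates of `X` (the entry in column `j` is composed with `x_j`, matching
the matrix-vector product `H_f(X) · X'`). -/
noncomputable def Hf {K : Type*} [Field K] {g : ℕ}
    (f : Matrix (Fin g) (Fin g) (PowerSeries K)) (X : Fin g → PowerSeries K) :
    Matrix (Fin g) (Fin g) (PowerSeries K) :=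
  Matrix.of fun i j => pscomp (f i j) (X j)

/-- `H_f(0)`, the matrix of constant coefficients of `f`. -/
noncomputable def Hf0 {K : Type*} [Field K] {g : ℕ}
    (f : Matrix (Fin g) (Fin g) (PowerSeries K)) : Matrix (Fin g) (Fin g) K :=
  Matrix.of fun i j => PowerSeries.constantCoeff (R := K) (f i j)

/-- Gauss norm of the truncation of a power series modulo `t^n`:
the maximum of the norms of the coefficients of degree `< n`. -/
noncomputable def gnorm {K : Type*} [NormedField K] (n : ℕ) (f : PowerSeries K) : NNReal :=
  (Finset.range n).sup fun k => ‖PowerSeries.coeff (R := K) k f‖₊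

/-- Sup norm of a vector of truncated power series. -/
noncomputable def gnormVec {K : Type*} [NormedField K] {g : ℕ} (n : ℕ)
    (x : Fin g → PowerSeries K) : NNReal :=
  Finset.univ.sup fun i => gnorm n (x i)

/-- Norm of a matrix of truncated power series (nonarchimedean setting:
the row sums may be replaced by maxima). -/
noncomputable def gnormMat {K : Type*} [NormedField K] {g : ℕ} (n : ℕ)
    (A : Matrix (Fin g) (Fin g) (PowerSeries K)) : NNReal :=
  Finset.univ.sup fun p : Fin g × Fin g => gnorm n (A p.1 p.2)

/-!
Integrating the system with `F i j = psint (f i j)` gives `psderiv (∑ j, F i j ∘ X j) = G i`,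
so the `t^k` coefficient of `∑ j, F i j ∘ X' j - F i j ∘ X j` is `k⁻¹` times the `t^(k-1)`
coefficient of `G' i - G i`: dividing by `k ≤ n` costs at most `⌊log_p n⌋` digits.

Induct on `k`, writing `X' = X + h` where the coefficients of `h` below `t^k` have norm
`≤ δ = p^(-N)`. In `F (X + h) - F X` the linear part contributes `H_f(0) h_k`; every other term is
`f_(r-1) * (C(r, s) / r) * X^(r-s) * h^s` with `s ≥ 1` and `r ≥ 2`, whose `t^k` coefficient only
sees coefficients of `h` below `t^k`. Since `C(r, s) / r = C(r-1, s-1) / s`, it has norm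
`≤ p^(v_p s) δ^s ≤ δ`. Hence `‖H_f(0) h_k‖ ≤ δ`, and the integral inverse `B0` of `H_f(0)` gives
`‖h_k‖ ≤ δ`.
-/

open Finset

section Calculus

variable {K : Type*} [Field K]

theorem psderiv_eq_derivative (f : PowerSeries K) : psderiv f = derivative K f := by
  ext n
  simp [psderiv, coeff_derivative, mul_comm]

theorem coeff_psderiv (f : PowerSeries K) (n : ℕ) :
    coeff n (psderiv f) = ((n + 1 : ℕ) : K) * coeff (n + 1) f := by
  simp [psderiv]

theorem coeff_pow_of_lt {x : PowerSeries K} (hx : constantCoeff x = 0) {d r : ℕ} (h : d < r) :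
    coeff d (x ^ r) = 0 :=
  X_pow_dvd_iff.1 (pow_dvd_pow_of_dvd (X_dvd_iff.2 hx) r) d h

theorem coeff_pscomp (f x : PowerSeries K) (d : ℕ) :
    coeff d (pscomp f x) = ∑ r ∈ range (d + 1), coeff r f * coeff d (x ^ r) := by
  simp [pscomp, coeff_C_mul]

theorem pscomp_eq_subst {x : PowerSeries K} (hx : constantCoeff x = 0) (f : PowerSeries K) :
    pscomp f x = f.subst x := by
  ext d
  rw [coeff_pscomp, coeff_subst' (HasSubst.of_constantCoeff_zero' hx),
    finsum_eq_sum_of_support_subset (s := range (d + 1))]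
  · simp only [smul_eq_mul]
  · intro r hr
    by_contra h
    rw [coe_range, Set.mem_Iio, not_lt] at h
    exact hr (by simp only [coeff_pow_of_lt hx (show d < r by omega), smul_zero])

theorem psderiv_pscomp {x : PowerSeries K} (hx : constantCoeff x = 0) (f : PowerSeries K) :
    psderiv (pscomp f x) = pscomp (psderiv f) x * psderiv x := by
  simp only [psderiv_eq_derivative, pscomp_eq_subst hx,
    derivative_subst (HasSubst.of_constantCoeff_zero' hx)]

theorem coeff_psint_zero (f : PowerSeries K) : coeff 0 (psint f) = 0 := by
  simp [psint]

theorem coeff_psint_succ (f : PowerSeries K) (n : ℕ) :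
    coeff (n + 1) (psint f) = ((n + 1 : ℕ) : K)⁻¹ * coeff n f := by
  simp [psint]

theorem psderiv_psint [CharZero K] (f : PowerSeries K) : psderiv (psint f) = f := by
  ext n
  simp only [psderiv, psint, coeff_mk, Nat.add_eq_zero_iff, one_ne_zero, and_false, ↓reduceIte,
    add_tsub_cancel_right]
  field_simp

theorem natCast_mul_coeff_of_psderiv_eq {u v : PowerSeries K} (h : psderiv u = v) {k : ℕ}
    (hk : 0 < k) : (k : K) * coeff k u = coeff (k - 1) v := by
  rw [← h, coeff_psderiv, Nat.sub_add_cancel hk]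

end Calculus

section Ultrametric

variable {R : Type*} [NormedRing R] [IsUltrametricDist R]

theorem nnnorm_coeff_mul_le {u v : PowerSeries R} {c d : NNReal}
    (hu : ∀ m, ‖coeff m u‖₊ ≤ c) (hv : ∀ m, ‖coeff m v‖₊ ≤ d) (m : ℕ) :
    ‖coeff m (u * v)‖₊ ≤ c * d := by
  rw [coeff_mul]
  exact IsUltrametricDist.nnnorm_sum_le_of_forall_le fun ij _ =>
    (nnnorm_mul_le _ _).trans (mul_le_mul' (hu _) (hv _))

theorem nnnorm_coeff_pow_le [NormOneClass R] {u : PowerSeries R} {c : NNReal}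
    (hu : ∀ m, ‖coeff m u‖₊ ≤ c) (s m : ℕ) : ‖coeff m (u ^ s)‖₊ ≤ c ^ s := by
  induction s generalizing m with
  | zero => rw [pow_zero, pow_zero, coeff_one]; split_ifs <;> simp
  | succ s ih => rw [pow_succ, pow_succ]; exact nnnorm_coeff_mul_le ih hu m

theorem nnnorm_mulVec_apply_le {m n : Type*} [Fintype n] {A : Matrix m n R}
    (hA : ∀ i j, ‖A i j‖₊ ≤ 1) {v : n → R} {δ : NNReal} (hv : ∀ j, ‖v j‖₊ ≤ δ) (i : m) :
    ‖A.mulVec v i‖₊ ≤ δ :=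
  IsUltrametricDist.nnnorm_sum_le_of_forall_le fun j _ =>
    (nnnorm_mul_le _ _).trans (by simpa using mul_le_mul' (hA i j) (hv j))

end Ultrametric

theorem coeff_mul_eq_zero_of_X_pow_dvd {R : Type*} [CommSemiring R] {u v : PowerSeries R}
    {k : ℕ} (hu : X ^ k ∣ u) (hv : X ∣ v) : coeff k (u * v) = 0 :=
  X_pow_dvd_iff.1 (pow_succ (X : PowerSeries R) k ▸ mul_dvd_mul hu hv) k k.lt_succ_self

theorem nnnorm_coeff_pow_mul_pow_le {R : Type*} [NormedCommRing R] [NormOneClass R]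
    [IsUltrametricDist R] {x h : PowerSeries R} (hx0 : constantCoeff x = 0)
    (hh0 : constantCoeff h = 0) (hx : ∀ m, ‖coeff m x‖₊ ≤ 1) {k : ℕ} {δ : NNReal}
    (hh : ∀ m < k, ‖coeff m h‖₊ ≤ δ) {a s : ℕ} (has : 2 ≤ a + s) :
    ‖coeff k (x ^ a * h ^ s)‖₊ ≤ δ ^ s := by
  set t : PowerSeries R := ↑(trunc k h)
  have ht : ∀ m, ‖coeff m t‖₊ ≤ δ := by
    intro m
    rw [Polynomial.coeff_coe, coeff_trunc]
    split_ifs with hm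
    exacts [hh m hm, by simp]
  have ht0 : constantCoeff t = 0 := by
    rw [← coeff_zero_eq_constantCoeff_apply, Polynomial.coeff_coe, coeff_trunc,
      coeff_zero_eq_constantCoeff_apply, hh0, ite_self]
  have hht : X ^ k ∣ h - t := ⟨_, sub_eq_iff_eq_add.2 (eq_X_pow_mul_shift_add_trunc k h)⟩
  have hw : X ∣ x ^ a * ∑ i ∈ range s, h ^ i * t ^ (s - 1 - i) := by
    rw [X_dvd_iff, map_mul, map_sum]
    simp only [map_mul, map_pow, hx0, hh0, ht0, ← pow_add]
    rcases a with _ | a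
    · rw [pow_zero, one_mul]
      exact sum_eq_zero fun i hi => zero_pow (by rw [mem_range] at hi; omega)
    · rw [zero_pow a.succ_ne_zero, zero_mul]
  have htrunc : coeff k (x ^ a * h ^ s) = coeff k (x ^ a * t ^ s) := by
    have hdiff : x ^ a * h ^ s - x ^ a * t ^ s
        = (h - t) * (x ^ a * ∑ i ∈ range s, h ^ i * t ^ (s - 1 - i)) := by
      rw [← mul_sub, ← geom_sum₂_mul]
      ring
    rw [← sub_eq_zero, ← map_sub, hdiff, coeff_mul_eq_zero_of_X_pow_dvd hht hw]
  rw [htrunc, ← one_mul (δ ^ s), ← one_pow a]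
  exact nnnorm_coeff_mul_le (nnnorm_coeff_pow_le hx a) (nnnorm_coeff_pow_le ht s) k

theorem padicValNat_le_sub_one {p s : ℕ} (hs : s ≠ 0) : padicValNat p s ≤ s - 1 := by
  have := padicValNat_le_nat_log (p := p) s
  have := Nat.log_lt_self p hs
  omega

section Padic

variable {p : ℕ} [Fact p.Prime]

theorem pow_padicValNat_mul_pow_le {δ : NNReal} (hδ : δ ≤ (p : NNReal)⁻¹) {s : ℕ} (hs : s ≠ 0) :
    (p : NNReal) ^ padicValNat p s * δ ^ s ≤ δ := by
  have hp : (1 : NNReal) ≤ p := by exact_mod_cast (Fact.out : p.Prime).one_le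
  obtain ⟨s, rfl⟩ := Nat.exists_eq_add_one_of_ne_zero hs
  calc (p : NNReal) ^ padicValNat p (s + 1) * δ ^ (s + 1)
      ≤ (p : NNReal) ^ s * (p : NNReal)⁻¹ ^ s * δ := by
        rw [pow_succ, ← mul_assoc]
        gcongr
        simpa using padicValNat_le_sub_one (p := p) hs
    _ = δ := by rw [← mul_pow, mul_inv_cancel₀ (by positivity), one_pow, one_mul]

end Padic

-- Satisfied by any absolute value on a finite extension of `ℚ_p` extending `|·|_p`.
def HasPadicNormOnNat (p : ℕ) (K : Type*) [NormedField K] : Prop :=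
  ∀ m : ℕ, 0 < m → ‖(m : K)‖₊ = (p : NNReal) ^ (-(padicValNat p m : ℤ))

namespace HasPadicNormOnNat

variable {p : ℕ} {K : Type*} [NormedField K]

theorem charZero [Fact p.Prime] (hK : HasPadicNormOnNat p K) : CharZero K :=
  charZero_of_inj_zero fun m hm => by
    by_contra h
    have := hK m (Nat.pos_of_ne_zero h)
    rw [hm, nnnorm_zero] at this
    exact zpow_ne_zero _ (by exact_mod_cast (Fact.out : p.Prime).ne_zero) this.symm

theorem nnnorm_inv_natCast (hK : HasPadicNormOnNat p K) {m : ℕ} (hm : 0 < m) :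
    ‖(m : K)⁻¹‖₊ = (p : NNReal) ^ padicValNat p m := by
  rw [nnnorm_inv, hK m hm, zpow_neg, inv_inv, zpow_natCast]

theorem nnnorm_choose_mul_inv_le [Fact p.Prime] [IsUltrametricDist K]
    (hK : HasPadicNormOnNat p K) {r s : ℕ} (hs : 0 < s) (hsr : s ≤ r) :
    ‖((r.choose s : ℕ) : K) * (r : K)⁻¹‖₊ ≤ (p : NNReal) ^ padicValNat p s := by
  obtain ⟨r, rfl⟩ := Nat.exists_eq_add_one_of_ne_zero (by omega : r ≠ 0)
  obtain ⟨s, rfl⟩ := Nat.exists_eq_add_one_of_ne_zero hs.ne'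
  have := hK.charZero
  have hchoose : (((r + 1).choose (s + 1) : ℕ) : K) * ((r + 1 : ℕ) : K)⁻¹
      = ((r.choose s : ℕ) : K) * ((s + 1 : ℕ) : K)⁻¹ := by
    field_simp
    exact_mod_cast (Nat.add_one_mul_choose_eq r s).symm
  rw [hchoose, nnnorm_mul, hK.nnnorm_inv_natCast s.succ_pos]
  exact mul_le_of_le_one_left' (IsUltrametricDist.nnnorm_natCast_le_one K _)

end HasPadicNormOnNat

theorem HasPadicNormOnNat.nnnorm_inv_natCast_mul_le {p : ℕ} [Fact p.Prime] {K : Type*}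
    [NormedField K] (hK : HasPadicNormOnNat p K) {k n N : ℕ} (hk : 0 < k) (hkn : k ≤ n) {c : K}
    (hc : ‖c‖₊ ≤ (p : NNReal) ^ (-((N + Nat.log p n : ℕ) : ℤ))) :
    ‖(k : K)⁻¹ * c‖₊ ≤ (p : NNReal) ^ (-(N : ℤ)) := by
  have hp : (1 : NNReal) ≤ p := by exact_mod_cast (Fact.out : p.Prime).one_le
  rw [nnnorm_mul, hK.nnnorm_inv_natCast hk]
  calc _ ≤ (p : NNReal) ^ Nat.log p n * (p : NNReal) ^ (-((N + Nat.log p n : ℕ) : ℤ)) :=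
        mul_le_mul' (pow_le_pow_right₀ hp
          ((padicValNat_le_nat_log k).trans (Nat.log_mono_right hkn))) hc
    _ = (p : NNReal) ^ (-(N : ℤ)) := by
        rw [← zpow_natCast, ← zpow_add₀ (by exact_mod_cast (Fact.out : p.Prime).ne_zero)]
        push_cast
        ring_nf

section Precision

variable {p : ℕ} [Fact p.Prime] {K : Type*} [NormedField K] [IsUltrametricDist K]

theorem nnnorm_inv_natCast_mul_coeff_add_pow_sub_pow_le (hK : HasPadicNormOnNat p K)
    {x h : PowerSeries K} (hx0 : constantCoeff x = 0) (hh0 : constantCoeff h = 0)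
    (hx : ∀ m, ‖coeff m x‖₊ ≤ 1) {k : ℕ} {δ : NNReal} (hδ : δ ≤ (p : NNReal)⁻¹)
    (hh : ∀ m < k, ‖coeff m h‖₊ ≤ δ) {r : ℕ} (hr : 2 ≤ r) :
    ‖(r : K)⁻¹ * coeff k ((x + h) ^ r - x ^ r)‖₊ ≤ δ := by
  rw [add_pow, sum_range_succ, Nat.sub_self, pow_zero, mul_one, Nat.choose_self, Nat.cast_one,
    mul_one, add_sub_cancel_right, map_sum, mul_sum]
  refine IsUltrametricDist.nnnorm_sum_le_of_forall_le fun a ha => ?_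
  rw [mem_range] at ha
  rw [← map_natCast (C (R := K)), coeff_mul_C, ← Nat.choose_symm ha.le, mul_comm (coeff k _),
    ← mul_assoc, mul_comm (r : K)⁻¹, nnnorm_mul]
  calc _ ≤ (p : NNReal) ^ padicValNat p (r - a) * δ ^ (r - a) :=
        mul_le_mul' (hK.nnnorm_choose_mul_inv_le (by omega) (by omega))
          (nnnorm_coeff_pow_mul_pow_le hx0 hh0 hx hh (by omega))
    _ ≤ δ := pow_padicValNat_mul_pow_le hδ (by omega)

theorem nnnorm_coeff_pscomp_psint_add_sub_sub_le (hK : HasPadicNormOnNat p K)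
    {f x h : PowerSeries K} (hf : ∀ m, ‖coeff m f‖₊ ≤ 1) (hx0 : constantCoeff x = 0)
    (hh0 : constantCoeff h = 0) (hx : ∀ m, ‖coeff m x‖₊ ≤ 1) {k : ℕ} (hk : 0 < k) {δ : NNReal}
    (hδ : δ ≤ (p : NNReal)⁻¹) (hh : ∀ m < k, ‖coeff m h‖₊ ≤ δ) :
    ‖coeff k (pscomp (psint f) (x + h) - pscomp (psint f) x) - constantCoeff f * coeff k h‖₊
      ≤ δ := by
  obtain ⟨k, rfl⟩ := Nat.exists_eq_add_one_of_ne_zero hk.ne'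
  have hsplit : coeff (k + 1) (pscomp (psint f) (x + h) - pscomp (psint f) x)
      - constantCoeff f * coeff (k + 1) h
      = ∑ r ∈ range k, coeff (r + 1) f *
          (((r + 2 : ℕ) : K)⁻¹ * coeff (k + 1) ((x + h) ^ (r + 2) - x ^ (r + 2))) := by
    rw [map_sub, coeff_pscomp, coeff_pscomp, ← sum_sub_distrib, sum_range_succ', sum_range_succ']
    simp only [coeff_psint_zero, coeff_psint_succ, map_sub, coeff_zero_eq_constantCoeff, map_add,
      pow_one, Nat.cast_add, Nat.cast_one, zero_mul, sub_zero, add_zero, zero_add]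
    rw [inv_one, one_mul, mul_add, add_sub_cancel_left, add_sub_cancel_right]
    refine sum_congr rfl fun r _ => ?_
    push_cast
    ring
  rw [hsplit]
  refine IsUltrametricDist.nnnorm_sum_le_of_forall_le fun r _ => ?_
  rw [nnnorm_mul, ← one_mul δ]
  exact mul_le_mul' (hf _)
    (nnnorm_inv_natCast_mul_coeff_add_pow_sub_pow_le hK hx0 hh0 hx hδ hh (by omega))

end Precision

section System

variable {K : Type*} {g : ℕ}

noncomputable def primitiveHf [Field K] (f : Matrix (Fin g) (Fin g) (PowerSeries K))
    (X : Fin g → PowerSeries K) (i : Fin g) : PowerSeries K :=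
  ∑ j, pscomp (psint (f i j)) (X j)

theorem psderiv_primitiveHf [Field K] [CharZero K] (f : Matrix (Fin g) (Fin g) (PowerSeries K))
    {X : Fin g → PowerSeries K} (hX : ∀ j, constantCoeff (X j) = 0) (i : Fin g) :
    psderiv (primitiveHf f X i) = (Hf f X).mulVec (fun j => psderiv (X j)) i := by
  rw [primitiveHf, psderiv_eq_derivative, map_sum]
  simp only [← psderiv_eq_derivative, psderiv_pscomp (hX _), psderiv_psint, Matrix.mulVec,
    dotProduct, Hf, Matrix.of_apply]

variable {p : ℕ} [Fact p.Prime] [NormedField K]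

theorem nnnorm_coeff_primitiveHf_sub_le (hK : HasPadicNormOnNat p K)
    {f : Matrix (Fin g) (Fin g) (PowerSeries K)} {G G' X X' : Fin g → PowerSeries K}
    (hX0 : ∀ j, constantCoeff (X j) = 0) (hX0' : ∀ j, constantCoeff (X' j) = 0)
    (hXsol : (Hf f X).mulVec (fun j => psderiv (X j)) = G)
    (hXsol' : (Hf f X').mulVec (fun j => psderiv (X' j)) = G') {n N k : ℕ}
    (hclose : ∀ i, ∀ m < n,
      ‖coeff m (G i - G' i)‖₊ ≤ (p : NNReal) ^ (-((N + Nat.log p n : ℕ)) : ℤ))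
    (hk : 0 < k) (hkn : k ≤ n) (i : Fin g) :
    ‖coeff k (primitiveHf f X' i - primitiveHf f X i)‖₊ ≤ (p : NNReal) ^ (-(N : ℤ)) := by
  have := hK.charZero
  have hderiv : psderiv (primitiveHf f X' i - primitiveHf f X i) = G' i - G i := by
    rw [psderiv_eq_derivative, map_sub, ← psderiv_eq_derivative, ← psderiv_eq_derivative,
      psderiv_primitiveHf f hX0', psderiv_primitiveHf f hX0, hXsol, hXsol']
  rw [eq_inv_mul_iff_mul_eq₀ (Nat.cast_ne_zero.2 hk.ne') |>.2
    (natCast_mul_coeff_of_psderiv_eq hderiv hk)]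
  refine hK.nnnorm_inv_natCast_mul_le hk hkn ?_
  rw [← nnnorm_neg, ← map_neg, neg_sub]
  exact hclose i _ (by omega)

theorem nnnorm_coeff_primitiveHf_sub_sub_mulVec_le [IsUltrametricDist K]
    (hK : HasPadicNormOnNat p K)
    {f : Matrix (Fin g) (Fin g) (PowerSeries K)} (hf : ∀ i j m, ‖coeff m (f i j)‖₊ ≤ 1)
    {X X' : Fin g → PowerSeries K} (hX0 : ∀ j, constantCoeff (X j) = 0)
    (hX0' : ∀ j, constantCoeff (X' j) = 0) (hX : ∀ j m, ‖coeff m (X j)‖₊ ≤ 1) {k : ℕ}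
    (hk : 0 < k) {δ : NNReal} (hδ : δ ≤ (p : NNReal)⁻¹)
    (hXX' : ∀ m < k, ∀ j, ‖coeff m (X' j - X j)‖₊ ≤ δ) (i : Fin g) :
    ‖coeff k (primitiveHf f X' i - primitiveHf f X i)
      - (Hf0 f).mulVec (fun j => coeff k (X' j - X j)) i‖₊ ≤ δ := by
  rw [primitiveHf, primitiveHf, ← sum_sub_distrib, map_sum, Matrix.mulVec, dotProduct,
    ← sum_sub_distrib]
  refine IsUltrametricDist.nnnorm_sum_le_of_forall_le fun j _ => ?_
  have := nnnorm_coeff_pscomp_psint_add_sub_sub_le hK (hf i j) (hX0 j)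
    (by rw [map_sub, hX0' j, hX0 j, sub_self]) (hX j) hk hδ (fun m hm => hXX' m hm j)
  rwa [add_sub_cancel] at this

end System

theorem newton_solver_precision_general {p : ℕ} [Fact p.Prime]
    {K : Type*} [NormedField K] [IsUltrametricDist K]
    (hnat : ∀ m : ℕ, 0 < m → ‖(m : K)‖₊ = (p : NNReal) ^ (-(padicValNat p m : ℤ)))
    {g : ℕ} (n N : ℕ) (hN : 1 ≤ N)
    (f : Matrix (Fin g) (Fin g) (PowerSeries K))
    (hf : ∀ i j k, ‖PowerSeries.coeff (R := K) k (f i j)‖₊ ≤ 1)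
    (B0 : Matrix (Fin g) (Fin g) K) (hB0r : B0 * Hf0 f = 1)
    (hB0int : ∀ i j, ‖B0 i j‖₊ ≤ 1)
    (G G' : Fin g → PowerSeries K)
    (hclose : ∀ i, ∀ k < n,
      ‖PowerSeries.coeff (R := K) k (G i - G' i)‖₊ ≤ (p : NNReal) ^ (-((N + Nat.log p n : ℕ)) : ℤ))
    (X X' : Fin g → PowerSeries K)
    (hX0 : ∀ i, PowerSeries.constantCoeff (R := K) (X i) = 0)
    (hX0' : ∀ i, PowerSeries.constantCoeff (R := K) (X' i) = 0)
    (hXsol : (Hf f X).mulVec (fun i => psderiv (X i)) = G)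
    (hXsol' : (Hf f X').mulVec (fun i => psderiv (X' i)) = G')
    (hXint : ∀ i k, ‖PowerSeries.coeff (R := K) k (X i)‖₊ ≤ 1) :
    ∀ i, ∀ k ≤ n, ‖PowerSeries.coeff (R := K) k (X i - X' i)‖₊ ≤ (p : NNReal) ^ (-(N : ℤ)) := by
  have hδ : (p : NNReal) ^ (-(N : ℤ)) ≤ (p : NNReal)⁻¹ := by
    rw [← zpow_neg_one]
    exact zpow_le_zpow_right₀ (by exact_mod_cast (Fact.out : p.Prime).one_le) (by omega)
  suffices H : ∀ k ≤ n, ∀ j, ‖coeff k (X' j - X j)‖₊ ≤ (p : NNReal) ^ (-(N : ℤ)) by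
    intro i k hk
    rw [← nnnorm_neg, ← map_neg, neg_sub]
    exact H k hk i
  intro k
  induction k using Nat.strong_induction_on with | _ k ih => ?_
  intro hkn j
  rcases Nat.eq_zero_or_pos k with rfl | hk
  · simp [hX0, hX0']
  set e : Fin g → K := fun j => coeff k (X' j - X j)
  have hHe : ∀ i, ‖(Hf0 f).mulVec e i‖₊ ≤ (p : NNReal) ^ (-(N : ℤ)) := fun i => by
    rw [← sub_sub_cancel (coeff k (primitiveHf f X' i - primitiveHf f X i)) ((Hf0 f).mulVec e i),
      sub_eq_add_neg]
    exact (IsUltrametricDist.nnnorm_add_le_max _ _).trans (max_le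
      (nnnorm_coeff_primitiveHf_sub_le hnat hX0 hX0' hXsol hXsol' hclose hk hkn i)
      ((nnnorm_neg _).trans_le (nnnorm_coeff_primitiveHf_sub_sub_mulVec_le hnat hf hX0 hX0'
        hXint hk hδ (fun m hm => ih m hm (by omega)) i)))
  have he : e = B0.mulVec ((Hf0 f).mulVec e) := by
    rw [Matrix.mulVec_mulVec, hB0r, Matrix.one_mulVec]
  show ‖e j‖₊ ≤ _
  rw [he]
  exact nnnorm_mulVec_apply_le hB0int hHe j

/-- Precision of the fixed-point Newton solver over a finite extension `K` of
`ℚ_p`, `p ≥ 5` (the normalized valuation on `K` is encoded by the hypothesis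
`hnat`): if `‖G - G̃‖ ≤ p^{-M}` with `M = N + ⌊log_p n⌋` and the solution `X` for
`G` has integral coefficients, then the truncated solutions agree up to `p^{-N}`:
`‖X_n(G) - X_n(G̃)‖ ≤ p^{-N}`. -/
theorem newton_solver_precision {p : ℕ} [Fact p.Prime] (hp : 5 ≤ p)
    {K : Type*} [NormedField K] [IsUltrametricDist K]
    (hnat : ∀ m : ℕ, 0 < m → ‖(m : K)‖₊ = (p : NNReal) ^ (-(padicValNat p m : ℤ)))
    {g : ℕ} (n N : ℕ) (hn : 1 ≤ n) (hN : 1 ≤ N)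
    (f : Matrix (Fin g) (Fin g) (PowerSeries K))
    (hf : ∀ i j k, ‖PowerSeries.coeff (R := K) k (f i j)‖₊ ≤ 1)
    (B0 : Matrix (Fin g) (Fin g) K) (hB0l : Hf0 f * B0 = 1) (hB0r : B0 * Hf0 f = 1)
    (hB0int : ∀ i j, ‖B0 i j‖₊ ≤ 1)
    (G G' : Fin g → PowerSeries K)
    (hG : ∀ i k, ‖PowerSeries.coeff (R := K) k (G i)‖₊ ≤ 1)
    (hG' : ∀ i k, ‖PowerSeries.coeff (R := K) k (G' i)‖₊ ≤ 1)
    (hclose : ∀ i, ∀ k < n,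
      ‖PowerSeries.coeff (R := K) k (G i - G' i)‖₊ ≤ (p : NNReal) ^ (-((N + Nat.log p n : ℕ)) : ℤ))
    (X X' : Fin g → PowerSeries K)
    (hX0 : ∀ i, PowerSeries.constantCoeff (R := K) (X i) = 0)
    (hX0' : ∀ i, PowerSeries.constantCoeff (R := K) (X' i) = 0)
    (hXsol : (Hf f X).mulVec (fun i => psderiv (X i)) = G)
    (hXsol' : (Hf f X').mulVec (fun i => psderiv (X' i)) = G')
    (hXint : ∀ i k, ‖PowerSeries.coeff (R := K) k (X i)‖₊ ≤ 1) :
    ∀ i, ∀ k ≤ n, ‖PowerSeries.coeff (R := K) k (X i - X' i)‖₊ ≤ (p : NNReal) ^ (-(N : ℤ)) :=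
  newton_solver_precision_general hnat n N hN f hf B0 hB0r hB0int G G' hclose X X' hX0 hX0' hXsol
    hXsol' hXint
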